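/- arXiv:2001.03983 — 3 statements merged into one kernel-verified Lean document; each statement's English description precedes it below -/
import Mathlib

section
/- Let C ⊆ 𝒴 be a nonempty code with |C| = M and let Q^C be the uniform probability mass function on C. Then the average distortion of the code equals E_{X ~ P_X}[ min_{y ∈ C} d(X,y) ] = D̃(1/M, Q^C). -/
open MeasureTheory

/-- The pairwise correct probability `p_c(x,y,u)` with respect to the pmf `Q` on `Y`:
`p_c(x,y,u) = Q{y' : d(x,y') < d(x,y)} + u * Q{y' : d(x,y') = d(x,y)}`. -/
noncomputable def pc {X Y : Type*} [Fintype Y] (Q : Y → ℝ) (d : X → Y → ℝ)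
    (x : X) (y : Y) (u : ℝ) : ℝ :=
  (∑ y' : Y, if d x y' < d x y then Q y' else 0)
    + u * (∑ y' : Y, if d x y' = d x y then Q y' else 0)

/-- The functional `D̃(w,Q) = w⁻¹ ⬝ E_{P ⊗ Q ⊗ Unif[0,1]}[ d(X,Y) ⬝ 1{p_c(X,Y,U) ≤ w} ]`. -/
noncomputable def Dtilde {X Y : Type*} [Fintype X] [Fintype Y]
    (P : X → ℝ) (Q : Y → ℝ) (d : X → Y → ℝ) (w : ℝ) : ℝ :=
  w⁻¹ * ∑ x : X, ∑ y : Y, P x * Q y * d x y *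
    (∫ u in Set.Icc (0:ℝ) 1, if pc Q d x y u ≤ w then (1:ℝ) else 0)

/-!
For `Q` uniform with mass `c` on `C` and `y ∈ C`, `p_c(x,y,u) = c (L + u E)` where `L` and `E` count
the codewords strictly closer to `x` than `y` and equally close. Hence `p_c ≤ c` on a set of `u` of
measure `1/E` when `y` is a nearest codeword (`L = 0`) and on a null set otherwise (`L ≥ 1`), so
summing `c d(x,y)` against these weights over `C` gives `c · min_{y ∈ C} d(x,y)`.
-/

lemma setIntegral_Icc_ite_add_mul_le (a b w : ℝ) (hb : 0 < b) :
    (∫ u in Set.Icc (0:ℝ) 1, if a + u * b ≤ w then (1:ℝ) else 0)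
      = max 0 (min 1 ((w - a) / b)) := by
  have hind : (fun u : ℝ => if a + u * b ≤ w then (1:ℝ) else 0)
      = Set.indicator (Set.Iic ((w - a) / b)) 1 := by
    ext u
    simp only [Set.indicator, Set.mem_Iic, le_div_iff₀ hb, Pi.one_apply, le_sub_iff_add_le']
  have hset : Set.Icc (0:ℝ) 1 ∩ Set.Iic ((w - a) / b) = Set.Icc 0 (min 1 ((w - a) / b)) := by
    ext u
    simp only [Set.mem_inter_iff, Set.mem_Icc, Set.mem_Iic, le_min_iff]
    tauto
  rw [hind, setIntegral_indicator measurableSet_Iic, Pi.one_def, setIntegral_const, hset,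
    smul_eq_mul, mul_one, Real.volume_real_Icc, sub_zero, max_comm]

lemma setIntegral_Icc_ite_natCast_add_mul_le_one (L E : ℕ) (hE : 0 < E) :
    (∫ u in Set.Icc (0:ℝ) 1, if (L : ℝ) + u * E ≤ 1 then (1:ℝ) else 0)
      = if L = 0 then 1 / (E : ℝ) else 0 := by
  have hE' : (0:ℝ) < E := by exact_mod_cast hE
  rw [setIntegral_Icc_ite_add_mul_le _ _ _ hE']
  split_ifs with hL
  · have : 1 / (E : ℝ) ≤ 1 := (div_le_one hE').2 (by exact_mod_cast hE)
    rw [hL, Nat.cast_zero, sub_zero, min_eq_right this, max_eq_right (by positivity)]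
  · have : (1 - L : ℝ) / E ≤ 0 :=
      div_nonpos_of_nonpos_of_nonneg (by simpa using Nat.one_le_iff_ne_zero.2 hL) hE'.le
    exact max_eq_left ((min_le_right _ _).trans this)

lemma card_filter_lt_eq_zero_iff {α : Type*} [LinearOrder α] {Y : Type*} {C : Finset Y}
    (f : Y → α) (hC : C.Nonempty) {y : Y} (hy : y ∈ C) :
    (C.filter fun y' => f y' < f y).card = 0 ↔ f y = C.inf' hC f := by
  simp only [Finset.card_eq_zero, Finset.filter_eq_empty_iff, not_lt]
  rw [← Finset.le_inf'_iff hC]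
  exact ⟨fun h => le_antisymm h (Finset.inf'_le f hy), Eq.le⟩

section UniformOnCode

variable {X Y : Type*} [Fintype Y] [DecidableEq Y] (C : Finset Y) (c : ℝ)

lemma sum_ite_ite_mem (p : Y → Prop) [DecidablePred p] :
    ∑ y, (if p y then (if y ∈ C then c else 0) else 0) = (C.filter p).card * c := by
  rw [← Finset.sum_filter, ← Finset.sum_filter, Finset.sum_const, nsmul_eq_mul,
    Finset.filter_filter]
  congr 3
  ext y
  simp [and_comm]

lemma pc_ite_mem (d : X → Y → ℝ) (x : X) (y : Y) (u : ℝ) :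
    pc (fun y => if y ∈ C then c else 0) d x y u
      = c * ((C.filter fun y' => d x y' < d x y).card
        + u * (C.filter fun y' => d x y' = d x y).card) := by
  rw [pc, sum_ite_ite_mem, sum_ite_ite_mem]
  ring

variable (d : X → Y → ℝ) (x : X) (hC : C.Nonempty) {c}

lemma setIntegral_pc_ite_mem_le (hc : 0 < c) {y : Y} (hy : y ∈ C) :
    (∫ u in Set.Icc (0:ℝ) 1,
        if pc (fun y => if y ∈ C then c else 0) d x y u ≤ c then (1:ℝ) else 0)
      = if d x y = C.inf' hC (d x)
        then 1 / ((C.filter fun y' => d x y' = C.inf' hC (d x)).card : ℝ) else 0 := by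
  have hE : 0 < (C.filter fun y' => d x y' = d x y).card :=
    Finset.card_pos.2 ⟨y, Finset.mem_filter.2 ⟨hy, rfl⟩⟩
  simp_rw [pc_ite_mem, mul_le_iff_le_one_right hc]
  rw [setIntegral_Icc_ite_natCast_add_mul_le_one _ _ hE]
  simp only [card_filter_lt_eq_zero_iff _ hC hy]
  split_ifs with h
  · rw [h]
  · rfl

lemma sum_ite_mem_mul_setIntegral_pc_le (hc : 0 < c) :
    ∑ y, (if y ∈ C then c else 0) * d x y *
        (∫ u in Set.Icc (0:ℝ) 1,
          if pc (fun y => if y ∈ C then c else 0) d x y u ≤ c then (1:ℝ) else 0)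
      = c * C.inf' hC (d x) := by
  have hS : ((C.filter fun y' => d x y' = C.inf' hC (d x)).card : ℝ) ≠ 0 := by
    obtain ⟨y, hy, hym⟩ := C.exists_mem_eq_inf' hC (d x)
    exact Nat.cast_ne_zero.2 (Finset.card_pos.2 ⟨y, Finset.mem_filter.2 ⟨hy, hym.symm⟩⟩).ne'
  simp_rw [ite_mul, zero_mul, Finset.sum_ite_mem, Finset.univ_inter]
  rw [Finset.sum_congr rfl fun y hy => by rw [setIntegral_pc_ite_mem_le C d x hC hc hy]]
  simp_rw [mul_ite, mul_zero]
  rw [← Finset.sum_filter, Finset.sum_congr rfl fun y hy => by rw [(Finset.mem_filter.1 hy).2],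
    Finset.sum_const, nsmul_eq_mul]
  field_simp

end UniformOnCode

theorem code_distortion_eq_general {X Y : Type*} [Fintype X] [Fintype Y] [DecidableEq Y]
    (P : X → ℝ) (d : X → Y → ℝ)
    (C : Finset Y) (hC : C.Nonempty) (M : ℕ) (hM : M = C.card) :
    ∑ x : X, P x * (C.inf' hC fun y => d x y)
      = Dtilde P (fun y => if y ∈ C then 1 / (M : ℝ) else 0) d (1 / (M : ℝ)) := by
  have hM0 : 0 < (M : ℝ) := by rw [hM]; exact_mod_cast hC.card_pos
  have hx (x : X) :
      ∑ y, P x * (if y ∈ C then 1 / (M : ℝ) else 0) * d x y *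
          (∫ u in Set.Icc (0:ℝ) 1,
            if pc (fun y => if y ∈ C then 1 / (M : ℝ) else 0) d x y u ≤ 1 / M then (1:ℝ) else 0)
        = P x * (1 / M * C.inf' hC (d x)) := by
    rw [← sum_ite_mem_mul_setIntegral_pc_le C d x hC (by positivity), Finset.mul_sum]
    simp_rw [mul_assoc]
  rw [Dtilde, Finset.sum_congr rfl fun x _ => hx x]
  simp_rw [mul_left_comm (P _), ← Finset.mul_sum]
  field_simp

/-- For a nonempty code `C` of size `M` with uniform pmf `Q^C`, the average distortion equals
`D̃(1/M, Q^C)`. -/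
theorem code_distortion_eq {X Y : Type*} [Fintype X] [Fintype Y] [Nonempty X] [Nonempty Y]
    [DecidableEq Y]
    (P : X → ℝ) (hP0 : ∀ x, 0 ≤ P x) (hP1 : ∑ x : X, P x = 1)
    (d : X → Y → ℝ) (hd : ∀ x y, 0 ≤ d x y)
    (C : Finset Y) (hC : C.Nonempty) (M : ℕ) (hM : M = C.card) :
    ∑ x : X, P x * (C.inf' hC fun y => d x y)
      = Dtilde P (fun y => if y ∈ C then 1 / (M : ℝ) else 0) d (1 / (M : ℝ)) :=
  code_distortion_eq_general P d C hC M hM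
end

section
/- For every nonempty code C ⊆ 𝒴 with |C| = M, the average distortion satisfies E_{X ~ P_X}[ min_{y ∈ C} d(X,y) ] ≥ inf_Q D̃(1/M, Q), where the infimum is over all probability mass functions Q on 𝒴. -/
/-!
The infimum is at most `D̃(1/M, Q)` for `Q` uniform on `C`. For this `Q`, a codeword `y` that
does not minimise `d(x, ·)` over `C` has `p_c(x, y, u) > 1/M` for every `u > 0`, since the
minimiser already contributes `1/M` to the strict part. If `k` codewords attain the minimum,
each of them has `p_c(x, y, u) = u k / M`, which is `≤ 1/M` exactly for `u ≤ 1/k`; these `k`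
terms contribute `(1/M) ⋅ min_{y ∈ C} d(x, y)` together, so `D̃(1/M, Q)` is the average distortion
of `C`.
-/

open MeasureTheory

open Finset

theorem integral_Icc_ite_add_mul_le (a w : ℝ) {b : ℝ} (hb : 0 < b) :
    ∫ u in Set.Icc (0:ℝ) 1, (if a + u * b ≤ w then (1:ℝ) else 0)
      = max 0 (min 1 ((w - a) / b)) := by
  have hset : {u : ℝ | a + u * b ≤ w} = Set.Iic ((w - a) / b) := by
    ext u
    simp only [Set.mem_ofPred_eq, Set.mem_Iic, le_div_iff₀ hb]
    constructor <;> intro h <;> linarith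
  have hind : (fun u : ℝ => if a + u * b ≤ w then (1:ℝ) else 0)
      = (Set.Iic ((w - a) / b)).indicator (fun _ => 1) := by
    rw [← hset]; rfl
  rw [hind, setIntegral_indicator measurableSet_Iic, ← Set.Ici_inter_Iic, Set.inter_assoc,
    Set.Iic_inter_Iic, Set.Ici_inter_Iic, setIntegral_const,
    smul_eq_mul, mul_one, Real.volume_real_Icc, sub_zero, max_comm]

noncomputable def uniformWeights {Y : Type*} [DecidableEq Y] (C : Finset Y) (y : Y) : ℝ :=
  if y ∈ C then (#C : ℝ)⁻¹ else 0

theorem uniformWeights_nonneg {Y : Type*} [DecidableEq Y] (C : Finset Y) (y : Y) :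
    0 ≤ uniformWeights C y := by
  unfold uniformWeights; split_ifs <;> positivity

section UniformWeights

variable {X Y : Type*} [Fintype Y] [DecidableEq Y] (C : Finset Y)

theorem sum_ite_uniformWeights (p : Y → Prop) [DecidablePred p] :
    ∑ y, (if p y then uniformWeights C y else 0) = (#(C.filter p) : ℝ) / #C := by
  simp only [uniformWeights, ← ite_and, and_comm (a := p _)]
  rw [← sum_filter, sum_const, nsmul_eq_mul, div_eq_mul_inv]
  congr 3
  ext y
  simp

theorem sum_uniformWeights (hC : C.Nonempty) : ∑ y, uniformWeights C y = 1 := by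
  simpa [hC.card_pos.ne'] using sum_ite_uniformWeights C (fun _ => True)

theorem pc_uniformWeights (d : X → Y → ℝ) (x : X) (y : Y) (u : ℝ) :
    pc (uniformWeights C) d x y u
      = #(C.filter (fun y' => d x y' < d x y)) / #C
        + u * (#(C.filter (fun y' => d x y' = d x y)) / #C) := by
  simp only [pc, sum_ite_uniformWeights]

variable {C} (hC : C.Nonempty) (d : X → Y → ℝ) (x : X) {y : Y}
include hC

theorem integral_pc_uniformWeights_of_inf'_lt (hy : y ∈ C) (hlt : C.inf' hC (d x) < d x y) :
    ∫ u in Set.Icc (0:ℝ) 1,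
      (if pc (uniformWeights C) d x y u ≤ 1 / #C then (1:ℝ) else 0) = 0 := by
  obtain ⟨y₀, hy₀, hy₀_min⟩ := C.exists_mem_eq_inf' hC (d x)
  have hcard : (0 : ℝ) < #C := by exact_mod_cast hC.card_pos
  have hbelow : 1 ≤ #(C.filter (fun y' => d x y' < d x y)) :=
    card_pos.2 ⟨y₀, mem_filter.2 ⟨hy₀, hy₀_min ▸ hlt⟩⟩
  have htie : 0 < #(C.filter (fun y' => d x y' = d x y)) :=
    card_pos.2 ⟨y, mem_filter.2 ⟨hy, rfl⟩⟩
  simp_rw [pc_uniformWeights]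
  rw [integral_Icc_ite_add_mul_le _ _ (by positivity)]
  have hnum : 1 / (#C : ℝ) - #(C.filter (fun y' => d x y' < d x y)) / #C ≤ 0 := by
    rw [← sub_div]
    exact div_nonpos_of_nonpos_of_nonneg (sub_nonpos.2 (by exact_mod_cast hbelow)) hcard.le
  exact max_eq_left (min_le_of_right_le (div_nonpos_of_nonpos_of_nonneg hnum (by positivity)))

theorem integral_pc_uniformWeights_of_eq_inf' (hy : y ∈ C) (heq : d x y = C.inf' hC (d x)) :
    ∫ u in Set.Icc (0:ℝ) 1,
      (if pc (uniformWeights C) d x y u ≤ 1 / #C then (1:ℝ) else 0)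
      = (#(C.filter (fun y' => d x y' = d x y)) : ℝ)⁻¹ := by
  have hcard : (0 : ℝ) < #C := by exact_mod_cast hC.card_pos
  have hbelow : C.filter (fun y' => d x y' < d x y) = ∅ :=
    filter_eq_empty_iff.2 fun y' hy' => not_lt.2 (heq ▸ inf'_le _ hy')
  have htie : 1 ≤ #(C.filter (fun y' => d x y' = d x y)) :=
    card_pos.2 ⟨y, mem_filter.2 ⟨hy, rfl⟩⟩
  simp_rw [pc_uniformWeights, hbelow]
  rw [integral_Icc_ite_add_mul_le _ _ (by positivity)]
  have hratio : (1 / (#C : ℝ) - ((#(∅ : Finset Y) : ℕ) : ℝ) / #C)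
      / (#(C.filter (fun y' => d x y' = d x y)) / #C)
      = (#(C.filter (fun y' => d x y' = d x y)) : ℝ)⁻¹ := by
    field_simp
    simp
  rw [hratio, min_eq_right (inv_le_one_of_one_le₀ (by exact_mod_cast htie)),
    max_eq_right (by positivity)]

theorem sum_uniformWeights_mul_integral_pc :
    ∑ y, uniformWeights C y * d x y *
      (∫ u in Set.Icc (0:ℝ) 1, if pc (uniformWeights C) d x y u ≤ 1 / #C then (1:ℝ) else 0)
      = (#C : ℝ)⁻¹ * C.inf' hC (d x) := by
  set m := C.inf' hC (d x)
  set k := #(C.filter (fun y' => d x y' = m)) with hk_def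
  have hk : (k : ℝ) ≠ 0 := by
    obtain ⟨y₀, hy₀, hy₀_min⟩ := C.exists_mem_eq_inf' hC (d x)
    exact_mod_cast (card_pos.2 ⟨y₀, mem_filter.2 ⟨hy₀, hy₀_min.symm⟩⟩).ne'
  have hterm : ∀ y ∈ C, uniformWeights C y * d x y *
      (∫ u in Set.Icc (0:ℝ) 1, if pc (uniformWeights C) d x y u ≤ 1 / #C then (1:ℝ) else 0)
      = if d x y = m then (#C : ℝ)⁻¹ * m * (k : ℝ)⁻¹ else 0 := by
    intro y hy
    rcases (inf'_le (d x) hy).eq_or_lt with hmin | hlt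
    · rw [integral_pc_uniformWeights_of_eq_inf' hC d x hy hmin.symm, if_pos hmin.symm,
        uniformWeights, if_pos hy, ← hmin]
    · rw [integral_pc_uniformWeights_of_inf'_lt hC d x hy hlt, if_neg hlt.ne', mul_zero]
  rw [← sum_subset (subset_univ C) (fun y _ hy => by simp [uniformWeights, hy]),
    sum_congr rfl hterm, ← sum_filter, sum_const, nsmul_eq_mul]
  rw [← hk_def]
  field_simp

theorem Dtilde_uniformWeights [Fintype X] (P : X → ℝ) :
    Dtilde P (uniformWeights C) d (1 / #C) = ∑ x, P x * C.inf' hC (d x) := by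
  have hcard : (#C : ℝ) ≠ 0 := by exact_mod_cast hC.card_pos.ne'
  simp_rw [Dtilde, mul_assoc (P _), ← mul_sum, sum_uniformWeights_mul_integral_pc hC, mul_sum]
  refine sum_congr rfl fun x _ => ?_
  field_simp

end UniformWeights

theorem Dtilde_nonneg {X Y : Type*} [Fintype X] [Fintype Y] {P : X → ℝ} {Q : Y → ℝ}
    {d : X → Y → ℝ} {w : ℝ} (hP : ∀ x, 0 ≤ P x) (hQ : ∀ y, 0 ≤ Q y) (hd : ∀ x y, 0 ≤ d x y)
    (hw : 0 ≤ w) : 0 ≤ Dtilde P Q d w := by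
  have hint : ∀ x y, 0 ≤ ∫ u in Set.Icc (0:ℝ) 1, if pc Q d x y u ≤ w then (1:ℝ) else 0 :=
    fun x y => setIntegral_nonneg measurableSet_Icc fun u _ => by split_ifs <;> norm_num
  exact mul_nonneg (inv_nonneg.2 hw) <| sum_nonneg fun x _ => sum_nonneg fun y _ =>
    mul_nonneg (mul_nonneg (mul_nonneg (hP x) (hQ y)) (hd x y)) (hint x y)

theorem converse_bound_general {X Y : Type*} [Fintype X] [Fintype Y]
    (P : X → ℝ) (hP0 : ∀ x, 0 ≤ P x)
    (d : X → Y → ℝ) (hd : ∀ x y, 0 ≤ d x y)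
    (C : Finset Y) (hC : C.Nonempty) (M : ℕ) (hM : M = C.card) :
    sInf {v : ℝ | ∃ Q : Y → ℝ, (∀ y, 0 ≤ Q y) ∧ (∑ y : Y, Q y = 1) ∧
        v = Dtilde P Q d (1 / (M : ℝ))}
      ≤ ∑ x : X, P x * (C.inf' hC fun y => d x y) := by
  classical
  subst hM
  have hbdd : BddBelow {v : ℝ | ∃ Q : Y → ℝ, (∀ y, 0 ≤ Q y) ∧ (∑ y : Y, Q y = 1) ∧
      v = Dtilde P Q d (1 / (#C : ℝ))} := by
    refine ⟨0, ?_⟩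
    rintro _ ⟨Q, hQ0, -, rfl⟩
    exact Dtilde_nonneg hP0 hQ0 hd (by positivity)
  calc _ ≤ Dtilde P (uniformWeights C) d (1 / #C) :=
        csInf_le hbdd ⟨_, uniformWeights_nonneg C, sum_uniformWeights C hC, rfl⟩
    _ = _ := Dtilde_uniformWeights hC d P

/-- Converse: for every nonempty code `C` with `|C| = M`, the average distortion is at least
`inf_Q D̃(1/M, Q)`, the infimum over pmfs `Q` on `Y`. -/
theorem converse_bound {X Y : Type*} [Fintype X] [Fintype Y] [Nonempty X] [Nonempty Y]
    (P : X → ℝ) (hP0 : ∀ x, 0 ≤ P x) (hP1 : ∑ x : X, P x = 1)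
    (d : X → Y → ℝ) (hd : ∀ x y, 0 ≤ d x y)
    (C : Finset Y) (hC : C.Nonempty) (M : ℕ) (hM : M = C.card) :
    sInf {v : ℝ | ∃ Q : Y → ℝ, (∀ y, 0 ≤ Q y) ∧ (∑ y : Y, Q y = 1) ∧
        v = Dtilde P Q d (1 / (M : ℝ))}
      ≤ ∑ x : X, P x * (C.inf' hC fun y => d x y) :=
  converse_bound_general P hP0 d hd C hC M hM
end

section
/- For every fixed w ∈ (0,1], the functional Q ↦ D̃(w,Q) is convex on the set of probability mass functions on 𝒴: for all probability mass functions Q₁, Q₂ on 𝒴 and all θ ∈ [0,1], D̃(w, θQ₁ + (1−θ)Q₂) ≤ θ D̃(w,Q₁) + (1−θ) D̃(w,Q₂). -/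
open MeasureTheory

/-!
For fixed `x`, write `z = d x`. The randomized tie-break makes `p_c(Y, U)` uniform on `[0, 1]`,
so `∑ y, Q y * z y * P_U(p_c(x, y, U) ≤ w)` is the integral of `z` over the lowest `w`-fraction
of the mass of `Q`. By the Rockafellar–Uryasev formula this equals `max_c (c * w - ∑ y, Q y * (c - z y)⁺)`, the
maximum being attained at a `w`-quantile `c` of `z` under `Q`. A maximum of functions affine in
`Q` is convex in `Q`, and `D̃(w, ·)` is a nonnegative combination of these.
-/

open Finset

theorem Finset.sum_sub_filter_lt_telescope {α M G : Type*} [LinearOrder α] [AddCommMonoid M]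
    [AddCommGroup G] (g : M → G) (m : α → M) (V : Finset α) :
    ∑ v ∈ V, (g (∑ v' ∈ V with v' ≤ v, m v') - g (∑ v' ∈ V with v' < v, m v'))
      = g (∑ v ∈ V, m v) - g 0 := by
  induction V using Finset.induction_on_max with
  | empty => simp
  | insert a s ha ih =>
    have has : a ∉ s := fun h => lt_irrefl a (ha a h)
    have hrest : ∑ v ∈ s, (g (∑ v' ∈ insert a s with v' ≤ v, m v')
        - g (∑ v' ∈ insert a s with v' < v, m v'))
        = ∑ v ∈ s, (g (∑ v' ∈ s with v' ≤ v, m v') - g (∑ v' ∈ s with v' < v, m v')) :=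
      sum_congr rfl fun v hv => by
        rw [filter_insert, if_neg (not_le.2 (ha v hv)), filter_insert, if_neg (asymm (ha v hv))]
    have htop : (insert a s).filter (· ≤ a) = insert a s :=
      filter_true_of_mem fun v hv => (mem_insert.1 hv).elim le_of_eq fun h => (ha v h).le
    have hbelow : (insert a s).filter (· < a) = s := by
      rw [filter_insert, if_neg (lt_irrefl a), filter_true_of_mem ha]
    rw [sum_insert has, htop, hbelow, hrest, ih, sum_insert has]
    abel

section UnitIntervalIntegral

variable {A B w : ℝ}

theorem integral_Icc_ite_add_mul_le_of_pos (hB : 0 < B) :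
    ∫ u in Set.Icc (0:ℝ) 1, (if A + u * B ≤ w then (1:ℝ) else 0) = max 0 (min 1 ((w - A) / B)) := by
  have hind : (fun u : ℝ => if A + u * B ≤ w then (1:ℝ) else 0)
      = (Set.Iic ((w - A) / B)).indicator 1 := funext fun u => by
    simp only [Set.indicator_apply, Set.mem_Iic, le_div_iff₀ hB, Pi.one_apply]
    congr 1
    exact propext ⟨fun h => by linarith, fun h => by linarith⟩
  have hinter : Set.Iic ((w - A) / B) ∩ Set.Icc 0 1 = Set.Icc 0 (min 1 ((w - A) / B)) := by
    ext u
    simp only [Set.mem_inter_iff, Set.mem_Icc, Set.mem_Iic, le_min_iff]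
    tauto
  rw [hind, integral_indicator_one measurableSet_Iic, measureReal_restrict_apply measurableSet_Iic,
    hinter, Real.volume_real_Icc, sub_zero, max_comm]

theorem mul_integral_Icc_ite_add_mul_le (hB : 0 ≤ B) :
    B * ∫ u in Set.Icc (0:ℝ) 1, (if A + u * B ≤ w then (1:ℝ) else 0) = min (A + B) w - min A w := by
  rcases hB.eq_or_lt with rfl | hB
  · simp
  rw [integral_Icc_ite_add_mul_le_of_pos hB]
  rcases le_total w A with h | h
  · have ht : (w - A) / B ≤ 0 := div_nonpos_of_nonpos_of_nonneg (by linarith) hB.le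
    rw [max_eq_left (min_le_of_right_le ht), min_eq_right h, min_eq_right (by linarith)]
    ring
  rcases le_total (A + B) w with h' | h'
  · have ht : 1 ≤ (w - A) / B := by rw [le_div_iff₀ hB]; linarith
    rw [min_eq_left ht, max_eq_right zero_le_one, min_eq_left h', min_eq_left h]
    ring
  · have ht : (w - A) / B ≤ 1 := by rw [div_le_one hB]; linarith
    rw [min_eq_right ht, max_eq_right (div_nonneg (by linarith) hB.le), min_eq_right h',
      min_eq_left h]
    field_simp

theorem integral_Icc_ite_add_mul_le_of_add_le (hB : 0 ≤ B) (h : A + B ≤ w) :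
    ∫ u in Set.Icc (0:ℝ) 1, (if A + u * B ≤ w then (1:ℝ) else 0) = 1 := by
  rw [setIntegral_congr_fun measurableSet_Icc fun u hu => if_pos (by nlinarith [hu.2]),
    setIntegral_const, measureReal_def, Real.volume_Icc]
  simp

theorem integral_Icc_ite_add_mul_le_of_le (hB : 0 < B) (h : w ≤ A) :
    ∫ u in Set.Icc (0:ℝ) 1, (if A + u * B ≤ w then (1:ℝ) else 0) = 0 := by
  have := mul_integral_Icc_ite_add_mul_le (A := A) (w := w) hB.le
  rw [min_eq_right (by linarith), min_eq_right h, sub_self] at this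
  exact (mul_eq_zero.1 this).resolve_left hB.ne'

theorem integral_Icc_ite_mem_Icc (p : ℝ → Prop) [DecidablePred p] :
    ∫ u in Set.Icc (0:ℝ) 1, (if p u then (1:ℝ) else 0) ∈ Set.Icc 0 1 := by
  have hbound : ∀ u, ‖(if p u then (1:ℝ) else 0)‖ ≤ 1 := fun u => by split_ifs <;> simp
  refine ⟨integral_nonneg fun u => by split_ifs <;> norm_num, le_trans (le_abs_self _) ?_⟩
  have := norm_setIntegral_le_of_norm_le_const (μ := volume) (s := Set.Icc (0:ℝ) 1)
    measure_Icc_lt_top fun u _ => hbound u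
  simpa [measureReal_def] using this

end UnitIntervalIntegral

section LowerTail

variable {Y : Type*} [Fintype Y]

/-- `condProbPcLe Q z w y = P_U(p_c(x, y, U) ≤ w)` for the distortion profile `z = d x`. -/
noncomputable def condProbPcLe (Q z : Y → ℝ) (w : ℝ) (y : Y) : ℝ :=
  ∫ u in Set.Icc (0:ℝ) 1,
    if (∑ y', if z y' < z y then Q y' else 0) + u * (∑ y', if z y' = z y then Q y' else 0) ≤ w
    then (1:ℝ) else 0

theorem sum_ite_le_eq_sum_ite_lt_add_sum_ite_eq (Q z : Y → ℝ) (v : ℝ) :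
    (∑ y, if z y ≤ v then Q y else 0)
      = (∑ y, if z y < v then Q y else 0) + ∑ y, if z y = v then Q y else 0 := by
  rw [← sum_add_distrib]
  refine sum_congr rfl fun y _ => ?_
  rcases lt_trichotomy (z y) v with h | h | h
  · simp [h.le, h, h.ne]
  · simp [h]
  · simp [not_le.2 h, not_lt.2 h.le, h.ne']

theorem sum_filter_image_sum_ite_eq {α M : Type*} [DecidableEq α] [AddCommMonoid M]
    (z : Y → α) (Q : Y → M) (p : α → Prop) [DecidablePred p] :
    ∑ v ∈ univ.image z with p v, ∑ y, (if z y = v then Q y else 0)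
      = ∑ y, if p (z y) then Q y else 0 := by
  rw [sum_comm]
  refine sum_congr rfl fun y _ => ?_
  rw [sum_ite_eq]
  simp

theorem sum_mul_condProbPcLe (Q z : Y → ℝ) (hQ : Q ∈ stdSimplex ℝ Y) {w : ℝ} (hw0 : 0 ≤ w)
    (hw1 : w ≤ 1) : ∑ y, Q y * condProbPcLe Q z w y = w := by
  classical
  set V := univ.image z
  set m : ℝ → ℝ := fun v => ∑ y, if z y = v then Q y else 0
  have hfiber : ∀ v, ∑ y ∈ univ with z y = v, Q y * condProbPcLe Q z w y
      = min (∑ v' ∈ V with v' ≤ v, m v') w - min (∑ v' ∈ V with v' < v, m v') w := fun v => by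
    rw [sum_filter_image_sum_ite_eq, sum_filter_image_sum_ite_eq,
      sum_ite_le_eq_sum_ite_lt_add_sum_ite_eq, ← mul_integral_Icc_ite_add_mul_le
        (sum_nonneg fun y _ => by split_ifs <;> simp [hQ.1 y]),
      sum_filter, sum_mul]
    refine sum_congr rfl fun y _ => ?_
    split_ifs with hy
    · rw [condProbPcLe, hy]
    · rw [zero_mul]
  have htotal : ∑ v ∈ V, m v = 1 := by
    simpa [hQ.2] using sum_filter_image_sum_ite_eq z Q fun _ => True
  rw [← sum_fiberwise_of_maps_to (g := z) (t := V) fun y _ => mem_image_of_mem z (mem_univ y),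
    sum_congr rfl fun v _ => hfiber v, sum_sub_filter_lt_telescope (fun a => min a w), htotal,
    min_eq_right hw1, min_eq_left hw0, sub_zero]

theorem sum_ite_eq_pos_of_ne_zero {Q : Y → ℝ} (hQ : ∀ y, 0 ≤ Q y) (z : Y → ℝ) {y : Y} (hy : Q y ≠ 0) :
    0 < ∑ y', if z y' = z y then Q y' else 0 :=
  (lt_of_le_of_ne (hQ y) hy.symm).trans_le <| by
    simpa using single_le_sum (f := fun y' => if z y' = z y then Q y' else 0)
      (fun y' _ => by split_ifs <;> simp [hQ y']) (mem_univ y)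

theorem exists_threshold_condProbPcLe (Q z : Y → ℝ)
    (hQ : Q ∈ stdSimplex ℝ Y) {w : ℝ} (hw1 : w ≤ 1) :
    ∃ c, ∀ y, Q y ≠ 0 → (z y < c → condProbPcLe Q z w y = 1) ∧
      (c < z y → condProbPcLe Q z w y = 0) := by
  classical
  set F : ℝ → ℝ := fun v => ∑ y, if z y ≤ v then Q y else 0
  obtain ⟨y₀, -, -⟩ := exists_ne_zero_of_sum_ne_zero (hQ.2.trans_ne one_ne_zero)
  have : Nonempty Y := ⟨y₀⟩
  obtain ⟨ytop, hytop⟩ := Finite.exists_max z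
  have hne : (univ.filter fun y => w ≤ F (z y)).Nonempty :=
    ⟨ytop, mem_filter.2 ⟨mem_univ _, hw1.trans_eq (hQ.2.symm.trans
      (sum_congr rfl fun y _ => (if_pos (hytop y)).symm))⟩⟩
  obtain ⟨yc, hyc, hmin⟩ := exists_min_image _ z hne
  refine ⟨z yc, fun y hy => ⟨fun hlt => ?_, fun hlt => ?_⟩⟩
  · have hFy : F (z y) < w := not_le.1 fun h => (hmin y (mem_filter.2 ⟨mem_univ _, h⟩)).not_gt hlt
    refine integral_Icc_ite_add_mul_le_of_add_le
      (sum_nonneg fun y' _ => by split_ifs <;> simp [hQ.1 y']) ?_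
    rw [← sum_ite_le_eq_sum_ite_lt_add_sum_ite_eq]
    exact hFy.le
  · refine integral_Icc_ite_add_mul_le_of_le (sum_ite_eq_pos_of_ne_zero hQ.1 z hy) ?_
    refine (mem_filter.1 hyc).2.trans (sum_le_sum fun y' _ => ?_)
    by_cases h : z y' ≤ z yc
    · simp [h, h.trans_lt hlt]
    · simp only [h, if_false]
      split_ifs <;> simp [hQ.1 y']

theorem condProbPcLe_mem_Icc (Q z : Y → ℝ) (w : ℝ) (y : Y) : condProbPcLe Q z w y ∈ Set.Icc 0 1 :=
  integral_Icc_ite_mem_Icc _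

theorem le_sum_mul_condProbPcLe (Q z : Y → ℝ) (hQ : Q ∈ stdSimplex ℝ Y) {w : ℝ} (hw0 : 0 ≤ w)
    (hw1 : w ≤ 1) (c : ℝ) :
    c * w - ∑ y, Q y * max 0 (c - z y) ≤ ∑ y, Q y * z y * condProbPcLe Q z w y := by
  have hle : ∀ y, condProbPcLe Q z w y * (c - z y) ≤ max 0 (c - z y) := fun y => by
    obtain ⟨h0, h1⟩ := condProbPcLe_mem_Icc Q z w y
    rcases le_total (c - z y) 0 with h | h
    · exact (mul_nonpos_of_nonneg_of_nonpos h0 h).trans (le_max_left _ _)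
    · exact (mul_le_of_le_one_left h h1).trans (le_max_right _ _)
  calc c * w - ∑ y, Q y * max 0 (c - z y)
      ≤ c * w - ∑ y, Q y * (condProbPcLe Q z w y * (c - z y)) :=
        sub_le_sub_left (sum_le_sum fun y _ => mul_le_mul_of_nonneg_left (hle y) (hQ.1 y)) _
    _ = ∑ y, Q y * z y * condProbPcLe Q z w y := by
        conv_lhs => enter [1, 2]; rw [← sum_mul_condProbPcLe Q z hQ hw0 hw1]
        rw [mul_sum, ← sum_sub_distrib]
        exact sum_congr rfl fun y _ => by ring

theorem exists_sum_mul_condProbPcLe_eq (Q z : Y → ℝ) (hQ : Q ∈ stdSimplex ℝ Y) {w : ℝ}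
    (hw0 : 0 ≤ w) (hw1 : w ≤ 1) :
    ∃ c, ∑ y, Q y * z y * condProbPcLe Q z w y = c * w - ∑ y, Q y * max 0 (c - z y) := by
  obtain ⟨c, hc⟩ := exists_threshold_condProbPcLe Q z hQ hw1
  refine ⟨c, ?_⟩
  conv_rhs => enter [1, 2]; rw [← sum_mul_condProbPcLe Q z hQ hw0 hw1]
  rw [mul_sum, ← sum_sub_distrib]
  refine sum_congr rfl fun y _ => ?_
  by_cases hy : Q y = 0
  · simp [hy]
  have hcy : condProbPcLe Q z w y * (c - z y) = max 0 (c - z y) := by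
    rcases lt_trichotomy (z y) c with h | h | h
    · rw [(hc y hy).1 h, one_mul, max_eq_right (by linarith)]
    · simp [h]
    · rw [(hc y hy).2 h, zero_mul, max_eq_left (by linarith)]
  linear_combination (-Q y) * hcy

theorem convexOn_sum_mul_condProbPcLe (z : Y → ℝ) {w : ℝ} (hw0 : 0 ≤ w) (hw1 : w ≤ 1) :
    ConvexOn ℝ (stdSimplex ℝ Y) fun Q => ∑ y, Q y * z y * condProbPcLe Q z w y := by
  refine ⟨convex_stdSimplex ℝ Y, fun Q₁ hQ₁ Q₂ hQ₂ a b ha hb hab => ?_⟩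
  obtain ⟨c, hc⟩ := exists_sum_mul_condProbPcLe_eq (a • Q₁ + b • Q₂) z
    (convex_stdSimplex ℝ Y hQ₁ hQ₂ ha hb hab) hw0 hw1
  have h₁ := le_sum_mul_condProbPcLe Q₁ z hQ₁ hw0 hw1 c
  have h₂ := le_sum_mul_condProbPcLe Q₂ z hQ₂ hw0 hw1 c
  simp only [hc, smul_eq_mul]
  calc c * w - ∑ y, (a • Q₁ + b • Q₂) y * max 0 (c - z y)
      = a * (c * w - ∑ y, Q₁ y * max 0 (c - z y)) + b * (c * w - ∑ y, Q₂ y * max 0 (c - z y)) := by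
        simp only [Pi.add_apply, Pi.smul_apply, smul_eq_mul, add_mul, mul_sub,
          sum_add_distrib, mul_sum, mul_assoc]
        linear_combination (-(c * w)) * hab
    _ ≤ _ := by gcongr

end LowerTail

theorem ConvexOn.sum {𝕜 E β ι : Type*} [Semiring 𝕜] [PartialOrder 𝕜] [AddCommMonoid E]
    [AddCommMonoid β] [PartialOrder β] [IsOrderedAddMonoid β] [SMul 𝕜 E] [Module 𝕜 β]
    [PosSMulMono 𝕜 β] {s : Set E} {t : Finset ι} {f : ι → E → β} (hs : Convex 𝕜 s)
    (hf : ∀ i ∈ t, ConvexOn 𝕜 s (f i)) : ConvexOn 𝕜 s fun x => ∑ i ∈ t, f i x := by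
  classical
  induction t using Finset.induction_on with
  | empty => simpa using convexOn_const 0 hs
  | insert i t hi ih =>
    simp_rw [sum_insert hi]
    exact (hf i (mem_insert_self i t)).add (ih fun j hj => hf j (mem_insert_of_mem hj))

theorem Dtilde_eq_sum_mul_condProbPcLe {X Y : Type*} [Fintype X] [Fintype Y] (P : X → ℝ)
    (Q : Y → ℝ) (d : X → Y → ℝ) (w : ℝ) :
    Dtilde P Q d w = w⁻¹ * ∑ x, P x * ∑ y, Q y * d x y * condProbPcLe Q (d x) w y := by
  rw [Dtilde]
  congr 1
  refine sum_congr rfl fun x _ => ?_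
  rw [mul_sum]
  refine sum_congr rfl fun y _ => ?_
  rw [show condProbPcLe Q (d x) w y
    = ∫ u in Set.Icc (0:ℝ) 1, if pc Q d x y u ≤ w then (1:ℝ) else 0 from rfl]
  ring

theorem convexOn_Dtilde {X Y : Type*} [Fintype X] [Fintype Y] (P : X → ℝ) (hP0 : ∀ x, 0 ≤ P x)
    (d : X → Y → ℝ) {w : ℝ} (hw0 : 0 ≤ w) (hw1 : w ≤ 1) :
    ConvexOn ℝ (stdSimplex ℝ Y) fun Q => Dtilde P Q d w := by
  simp only [Dtilde_eq_sum_mul_condProbPcLe]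
  refine ConvexOn.smul (inv_nonneg.2 hw0) (ConvexOn.sum (convex_stdSimplex ℝ Y) fun x _ => ?_)
  exact (convexOn_sum_mul_condProbPcLe (d x) hw0 hw1).smul (hP0 x)

theorem Dtilde_convex_general {X Y : Type*} [Fintype X] [Fintype Y]
    (P : X → ℝ) (hP0 : ∀ x, 0 ≤ P x)
    (d : X → Y → ℝ)
    (w : ℝ) (hw : w ∈ Set.Ioc (0:ℝ) 1)
    (Q₁ Q₂ : Y → ℝ) (hQ₁0 : ∀ y, 0 ≤ Q₁ y) (hQ₁1 : ∑ y : Y, Q₁ y = 1)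
    (hQ₂0 : ∀ y, 0 ≤ Q₂ y) (hQ₂1 : ∑ y : Y, Q₂ y = 1)
    (θ : ℝ) (hθ : θ ∈ Set.Icc (0:ℝ) 1) :
    Dtilde P (fun y => θ * Q₁ y + (1 - θ) * Q₂ y) d w
      ≤ θ * Dtilde P Q₁ d w + (1 - θ) * Dtilde P Q₂ d w :=
  (convexOn_Dtilde P hP0 d hw.1.le hw.2).2 ⟨hQ₁0, hQ₁1⟩ ⟨hQ₂0, hQ₂1⟩ hθ.1 (sub_nonneg.2 hθ.2)
    (add_sub_cancel θ 1)

/-- For fixed `w ∈ (0,1]`, the functional `Q ↦ D̃(w,Q)` is convex on pmfs on `Y`. -/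
theorem Dtilde_convex {X Y : Type*} [Fintype X] [Fintype Y] [Nonempty X] [Nonempty Y]
    (P : X → ℝ) (hP0 : ∀ x, 0 ≤ P x) (hP1 : ∑ x : X, P x = 1)
    (d : X → Y → ℝ) (hd : ∀ x y, 0 ≤ d x y)
    (w : ℝ) (hw : w ∈ Set.Ioc (0:ℝ) 1)
    (Q₁ Q₂ : Y → ℝ) (hQ₁0 : ∀ y, 0 ≤ Q₁ y) (hQ₁1 : ∑ y : Y, Q₁ y = 1)
    (hQ₂0 : ∀ y, 0 ≤ Q₂ y) (hQ₂1 : ∑ y : Y, Q₂ y = 1)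
    (θ : ℝ) (hθ : θ ∈ Set.Icc (0:ℝ) 1) :
    Dtilde P (fun y => θ * Q₁ y + (1 - θ) * Q₂ y) d w
      ≤ θ * Dtilde P Q₁ d w + (1 - θ) * Dtilde P Q₂ d w :=
  Dtilde_convex_general P hP0 d w hw Q₁ Q₂ hQ₁0 hQ₁1 hQ₂0 hQ₂1 θ hθ
end
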